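/- arXiv:1509.08243 — 3 statements merged into one kernel-verified Lean document; each statement's English description precedes it below -/
import Mathlib

section
/- Let b, c be integers with δ = b² - c square-free, δ ≠ 0, and δ ≢ 1 (mod 4). Define ρ(d) = #{0 ≤ m < d : m² + 2bm + c ≡ 0 (mod d)}, and define χ(n) = (δ/n) (the Jacobi symbol) if gcd(n, 2δ) = 1 and χ(n) = 0 otherwise. Then for every positive integer d, ρ(d) = Σ_{lm = d} μ²(l) χ(m), where μ is the Möbius function. -/
open Finset ArithmeticFunction
open scoped ArithmeticFunction.Moebius

/-!
Completing the square, `ρ d` counts the square roots of `δ` modulo `d`. Both sides are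
multiplicative in `d` (the left one by the Chinese remainder theorem), so it suffices to compare
them at prime powers `p ^ k`, where the right side is `χ (p ^ k) + χ (p ^ (k - 1))`.
If `p ∤ 2δ`, then `ℤ/p^k` is a local ring in which `2` and `δ` are units, so `δ` has exactly
two square roots there when it is a square mod `p` (Hensel) and none otherwise: `1 + (δ/p)`
roots in all. If `p ∣ 2δ`, then `δ` has one square root mod `p` and none mod `p ^ 2`
(resp. mod `4` when `p = 2 ∤ δ`), because `δ` is squarefree and `δ ≢ 1 (mod 4)`.
-/

theorem IsLocalRing.sq_eq_sq_iff_of_isUnit_two {R : Type*} [CommRing R] [IsLocalRing R]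
    {x y : R} (h2 : IsUnit (2 : R)) (hx : IsUnit x) : y ^ 2 = x ^ 2 ↔ y = x ∨ y = -x := by
  refine ⟨fun h => ?_, by rintro (rfl | rfl) <;> ring⟩
  have hy : IsUnit y := (isUnit_pow_iff two_ne_zero).mp (h ▸ hx.pow 2)
  have hprod : (y - x) * (y + x) = 0 := by linear_combination h
  have hsum : IsUnit ((y - x) + (y + x)) := by
    rw [show (y - x) + (y + x) = 2 * y by ring]
    exact h2.mul hy
  rcases isUnit_or_isUnit_of_isUnit_add hsum with hu | hu
  · exact Or.inr (eq_neg_of_add_eq_zero_left (hu.mul_right_eq_zero.mp hprod))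
  · exact Or.inl (sub_eq_zero.mp (hu.mul_left_eq_zero.mp hprod))

theorem IsLocalRing.card_sq_eq_of_isUnit_two {R : Type*} [CommRing R] [IsLocalRing R]
    [Fintype R] [DecidableEq R] {a : R} (h2 : IsUnit (2 : R)) (ha : IsUnit a)
    (hsq : IsSquare a) : #{y : R | y ^ 2 = a} = 2 := by
  obtain ⟨x, rfl⟩ := hsq
  have hx : IsUnit x := isUnit_of_mul_isUnit_left ha
  have hroots : ({y : R | y ^ 2 = x * x} : Finset R) = {x, -x} := by
    ext y
    simp [← sq, sq_eq_sq_iff_of_isUnit_two h2 hx]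
  rw [hroots, card_pair]
  intro h
  exact (h2.mul hx).ne_zero (by linear_combination h)

theorem ZMod.isLocalRing_prime_pow {p k : ℕ} [Fact p.Prime] (hk : k ≠ 0) :
    IsLocalRing (ZMod (p ^ k)) :=
  haveI : Nontrivial (ZMod (p ^ k)) :=
    ZMod.nontrivial_iff.mpr (Nat.one_lt_pow hk (Fact.out : p.Prime).one_lt).ne'
  IsLocalRing.of_surjective' (PadicInt.toZModPow k) (ZMod.ringHom_surjective _)

theorem ZMod.isUnit_intCast_prime_pow_iff {p k : ℕ} [Fact p.Prime] (hk : k ≠ 0) {a : ℤ} :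
    IsUnit (a : ZMod (p ^ k)) ↔ ¬ (p : ℤ) ∣ a := by
  have := ZMod.isLocalRing_prime_pow (p := p) hk
  let f := ZMod.castHom (dvd_pow_self p hk) (ZMod p)
  have := IsLocalHom.of_surjective f (ZMod.ringHom_surjective _)
  rw [← isUnit_map_iff f, map_intCast, CharP.isUnit_intCast_iff (p := p) Fact.out]

theorem isSquare_intCast_zmod_iff {n : ℕ} {a : ℤ} :
    IsSquare (a : ZMod n) ↔ ∃ X : ℤ, (n : ℤ) ∣ X ^ 2 - a := by
  constructor
  · rintro ⟨r, hr⟩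
    obtain ⟨X, rfl⟩ := ZMod.intCast_surjective r
    exact ⟨X, (ZMod.intCast_eq_intCast_iff_dvd_sub _ _ _).mp (by push_cast; rw [hr, sq])⟩
  · rintro ⟨X, hX⟩
    refine ⟨X, ?_⟩
    rw [(ZMod.intCast_eq_intCast_iff_dvd_sub _ _ _).mpr hX]
    push_cast
    ring

theorem isSquare_intCast_zmod_pow {n : ℕ} {a : ℤ} (hn : IsCoprime (n : ℤ) (2 * a))
    (h : IsSquare (a : ZMod n)) (k : ℕ) : IsSquare (a : ZMod (n ^ k)) := by
  rcases k with _ | k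
  · exact ⟨0, Subsingleton.elim (α := ZMod 1) _ _⟩
  induction k with
  | zero => rwa [zero_add, pow_one]
  | succ k ih =>
    obtain ⟨X, u, hu⟩ := isSquare_intCast_zmod_iff.mp ih
    push_cast at hu
    have hX : IsCoprime (n : ℤ) (2 * X) := by
      have : IsCoprime (n : ℤ) (2 * X * X + n * (-2 * n ^ k * u)) := by
        convert hn using 2; linear_combination 2 * hu
      exact this.of_add_mul_left_right.of_mul_right_left
    obtain ⟨s, t, hst⟩ := hX
    -- Newton step `X - (X ^ 2 - a) / (2 * X)`, inverting `2 * X` modulo `n` by Bézout.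
    refine isSquare_intCast_zmod_iff.mpr
      ⟨X - u * t * n ^ (k + 1), u * s + u ^ 2 * t ^ 2 * n ^ k, ?_⟩
    push_cast
    linear_combination hu - (n : ℤ) ^ (k + 1) * u * hst

theorem card_filter_range_eq_card_filter_zmod (n : ℕ) [NeZero n] (P : ZMod n → Prop)
    [DecidablePred P] : #((range n).filter fun m : ℕ => P m) = #{x : ZMod n | P x} :=
  card_nbij' (fun m => m) ZMod.val (fun m hm => by simp_all)
    (fun x hx => by simp_all [ZMod.val_lt]) (fun m hm => by simp_all [Nat.mod_eq_of_lt])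
    (fun x _ => ZMod.natCast_zmod_val x)

-- Counted on `range n` rather than in `ZMod n`, since `ZMod 0 = ℤ` would spoil the value at `0`.
def sqrtCount (a : ℤ) : ArithmeticFunction ℕ :=
  ⟨fun n => #((range n).filter fun m : ℕ => (n : ℤ) ∣ (m : ℤ) ^ 2 - a), rfl⟩

theorem sqrtCount_apply (a : ℤ) (n : ℕ) [NeZero n] :
    sqrtCount a n = #{x : ZMod n | x ^ 2 = (a : ZMod n)} := by
  rw [← card_filter_range_eq_card_filter_zmod n (fun x => x ^ 2 = (a : ZMod n))]
  show #((range n).filter _) = _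
  congr 1
  apply filter_congr
  intro m _
  rw [← ZMod.intCast_eq_intCast_iff_dvd_sub, eq_comm]
  push_cast
  rfl

theorem card_filter_dvd_quadratic_eq_sqrtCount (b c : ℤ) (d : ℕ) :
    #((range d).filter fun m : ℕ => (d : ℤ) ∣ (m : ℤ) ^ 2 + 2 * b * m + c) =
      sqrtCount (b ^ 2 - c) d := by
  rcases eq_or_ne d 0 with rfl | hd
  · rfl
  have := NeZero.mk hd
  have hroot (x : ZMod d) :
      x ^ 2 + 2 * b * x + c = 0 ↔ (x + b) ^ 2 = ((b ^ 2 - c : ℤ) : ZMod d) := by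
    push_cast
    constructor <;> intro h <;> linear_combination h
  rw [sqrtCount_apply]
  calc #((range d).filter fun m : ℕ => (d : ℤ) ∣ (m : ℤ) ^ 2 + 2 * b * m + c)
      = #{x : ZMod d | (x + b) ^ 2 = ((b ^ 2 - c : ℤ) : ZMod d)} := by
        rw [← card_filter_range_eq_card_filter_zmod]
        congr 1
        apply filter_congr
        intro m _
        rw [← hroot, ← ZMod.intCast_zmod_eq_zero_iff_dvd]
        push_cast
        rfl
    _ = #{y : ZMod d | y ^ 2 = ((b ^ 2 - c : ℤ) : ZMod d)} :=
        card_equiv (Equiv.addRight (b : ZMod d)) (by simp)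

theorem sqrtCount_isMultiplicative (a : ℤ) : (sqrtCount a).IsMultiplicative := by
  refine IsMultiplicative.iff_ne_zero.mpr
    ⟨by simp [sqrtCount_apply, Subsingleton.elim _ (a : ZMod 1)], fun {m n} hm hn hmn => ?_⟩
  have := NeZero.mk hm
  have := NeZero.mk hn
  rw [sqrtCount_apply, sqrtCount_apply, sqrtCount_apply, ← card_product, ← filter_product]
  refine card_equiv (ZMod.chineseRemainder hmn).toEquiv fun x => ?_
  simp only [mem_filter, mem_univ, true_and, mem_product]
  rw [← (ZMod.chineseRemainder hmn).injective.eq_iff, Prod.ext_iff, map_pow, map_intCast]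
  simp

theorem sqrtCount_eq_zero_of_not_isSquare {a : ℤ} {m n : ℕ} (hmn : m ∣ n)
    (h : ¬ IsSquare (a : ZMod m)) : sqrtCount a n = 0 := by
  rcases eq_or_ne n 0 with rfl | hn
  · rfl
  have := NeZero.mk hn
  rw [sqrtCount_apply, card_eq_zero, filter_eq_empty_iff]
  intro x _ hx
  exact h ⟨ZMod.castHom hmn _ x, by rw [← sq, ← map_pow, hx, map_intCast]⟩

theorem sqrtCount_prime_of_dvd {a : ℤ} {p : ℕ} (hp : p.Prime) (hpa : (p : ℤ) ∣ a) :
    sqrtCount a p = 1 := by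
  have := Fact.mk hp
  rw [sqrtCount_apply, (ZMod.intCast_zmod_eq_zero_iff_dvd a p).mpr hpa, card_eq_one]
  exact ⟨0, by ext; simp⟩

theorem sqrtCount_two (a : ℤ) : sqrtCount a 2 = 1 := by
  rw [sqrtCount_apply]
  generalize (a : ZMod 2) = x
  revert x
  decide

theorem not_isSquare_intCast_zmod_sq {a : ℤ} {p : ℕ} (hp : p.Prime) (ha : Squarefree a)
    (hpa : (p : ℤ) ∣ a) : ¬ IsSquare (a : ZMod (p ^ 2)) := by
  intro hsq
  obtain ⟨X, hX⟩ := isSquare_intCast_zmod_iff.mp hsq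
  have hp' : Prime (p : ℤ) := Nat.prime_iff_prime_int.mp hp
  push_cast at hX
  have hpX : (p : ℤ) ∣ X := hp'.dvd_of_dvd_pow (n := 2) <| by
    simpa using (dvd_pow_self (p : ℤ) two_ne_zero).trans hX |>.add hpa
  have hp2a : (p : ℤ) * p ∣ a := by
    rw [← sq]; simpa using (pow_dvd_pow_of_dvd hpX 2).sub hX
  exact hp'.not_isUnit (ha _ hp2a)

theorem not_isSquare_intCast_zmod_four {a : ℤ} (ha : a % 4 = 3) : ¬ IsSquare (a : ZMod 4) := by
  rw [← ZMod.intCast_mod, Nat.cast_ofNat, ha]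
  decide

theorem sqrtCount_prime_pow_of_not_dvd {a : ℤ} {p k : ℕ} [hp : Fact p.Prime]
    (hpa : ¬ (p : ℤ) ∣ 2 * a) (hk : k ≠ 0) :
    (sqrtCount a (p ^ k) : ℤ) = 1 + legendreSym p a := by
  have hunit : IsUnit ((2 * a : ℤ) : ZMod (p ^ k)) :=
    (ZMod.isUnit_intCast_prime_pow_iff hk).mpr hpa
  push_cast at hunit
  have ha : (a : ZMod p) ≠ 0 := fun h =>
    hpa (((ZMod.intCast_zmod_eq_zero_iff_dvd a p).mp h).mul_left 2)
  by_cases hsq : IsSquare (a : ZMod p)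
  · have := ZMod.isLocalRing_prime_pow (p := p) hk
    have hcop : IsCoprime (p : ℤ) (2 * a) :=
      (Prime.coprime_iff_not_dvd (Nat.prime_iff_prime_int.mp hp.out)).mpr hpa
    rw [sqrtCount_apply, IsLocalRing.card_sq_eq_of_isUnit_two (isUnit_of_mul_isUnit_left hunit)
      (isUnit_of_mul_isUnit_right hunit) (isSquare_intCast_zmod_pow hcop hsq k),
      (legendreSym.eq_one_iff p ha).mpr hsq]
    norm_num
  · rw [sqrtCount_eq_zero_of_not_isSquare (dvd_pow_self p hk) hsq,
      (legendreSym.eq_neg_one_iff p).mpr hsq]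
    norm_num

theorem sqrtCount_prime_pow_of_dvd {a : ℤ} {p k : ℕ} (hp : p.Prime) (ha : Squarefree a)
    (ha4 : a % 4 ≠ 1) (hpa : (p : ℤ) ∣ 2 * a) (hk : k ≠ 0) :
    sqrtCount a (p ^ k) = if k = 1 then 1 else 0 := by
  have hp_eq_two : ¬ (p : ℤ) ∣ a → p = 2 := fun h => by
    have := ((Nat.prime_iff_prime_int.mp hp).dvd_or_dvd hpa).resolve_right h
    exact (Nat.prime_dvd_prime_iff_eq hp Nat.prime_two).mp (by exact_mod_cast this)
  split_ifs with hk1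
  · subst hk1
    rw [pow_one]
    by_cases h : (p : ℤ) ∣ a
    · exact sqrtCount_prime_of_dvd hp h
    · rw [hp_eq_two h, sqrtCount_two]
  · refine sqrtCount_eq_zero_of_not_isSquare (pow_dvd_pow p (by omega : 2 ≤ k)) ?_
    by_cases h : (p : ℤ) ∣ a
    · exact not_isSquare_intCast_zmod_sq hp ha h
    · obtain rfl := hp_eq_two h
      exact not_isSquare_intCast_zmod_four (by omega)

def jacobiChar (a : ℤ) : ArithmeticFunction ℤ :=
  ⟨fun n => if n.gcd (2 * a).natAbs = 1 then jacobiSym a n else 0, by simp; omega⟩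

theorem jacobiChar_apply (a : ℤ) (n : ℕ) :
    jacobiChar a n = if n.gcd (2 * a).natAbs = 1 then jacobiSym a n else 0 := rfl

theorem jacobiChar_isMultiplicative (a : ℤ) : (jacobiChar a).IsMultiplicative := by
  refine IsMultiplicative.iff_ne_zero.mpr ⟨by simp [jacobiChar_apply], fun {m n} hm hn _ => ?_⟩
  have := NeZero.mk hm
  have := NeZero.mk hn
  simp only [jacobiChar_apply]
  by_cases h : (m * n).Coprime (2 * a).natAbs
  · obtain ⟨hm', hn'⟩ := Nat.coprime_mul_iff_left.mp h
    rw [if_pos h, if_pos hm', if_pos hn', jacobiSym.mul_right]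
  · rw [if_neg h]
    rcases not_and_or.mp (mt Nat.coprime_mul_iff_left.mpr h) with h' | h'
    · rw [if_neg h', zero_mul]
    · rw [if_neg h', mul_zero]

theorem jacobiChar_prime_pow_of_dvd {a : ℤ} {p k : ℕ} (hp : p.Prime) (hpa : (p : ℤ) ∣ 2 * a)
    (hk : k ≠ 0) : jacobiChar a (p ^ k) = 0 := by
  have hcop : ¬ (p ^ k).Coprime (2 * a).natAbs := by
    rw [Nat.coprime_pow_left_iff (Nat.pos_of_ne_zero hk), hp.coprime_iff_not_dvd, not_not]
    exact Int.natCast_dvd.mp hpa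
  rw [jacobiChar_apply, if_neg hcop]

theorem jacobiChar_prime_pow_of_not_dvd {a : ℤ} {p : ℕ} [hp : Fact p.Prime]
    (hpa : ¬ (p : ℤ) ∣ 2 * a) (k : ℕ) : jacobiChar a (p ^ k) = legendreSym p a ^ k := by
  have hcop : p.Coprime (2 * a).natAbs :=
    hp.out.coprime_iff_not_dvd.mpr (mt Int.natCast_dvd.mpr hpa)
  rw [jacobiChar_apply, if_pos (Nat.Coprime.pow_left k hcop), jacobiSym.pow_right,
    jacobiSym.legendreSym.to_jacobiSym]

theorem pmul_moebius_moebius_mul_apply_prime_pow (f : ArithmeticFunction ℤ) {p k : ℕ}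
    (hp : p.Prime) (hk : k ≠ 0) : (pmul μ μ * f) (p ^ k) = f (p ^ k) + f (p ^ (k - 1)) := by
  obtain ⟨j, rfl⟩ := Nat.exists_eq_add_of_le' (Nat.pos_of_ne_zero hk)
  rw [mul_apply, Nat.sum_divisorsAntidiagonal (fun x y => pmul μ μ x * f y),
    Nat.sum_divisors_prime_pow hp, sum_range_succ', sum_range_succ', sum_eq_zero]
  · simp [pmul_apply, moebius_apply_prime hp, pow_succ, hp.pos, add_comm]
  · intro i _
    rw [pmul_apply, moebius_apply_prime_pow hp (by omega), if_neg (by omega)]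
    simp

theorem sqrtCount_eq_pmul_moebius_moebius_mul_jacobiChar {a : ℤ} (ha : Squarefree a)
    (ha4 : a % 4 ≠ 1) : (sqrtCount a : ArithmeticFunction ℤ) = pmul μ μ * jacobiChar a := by
  have hχ := jacobiChar_isMultiplicative a
  refine (IsMultiplicative.eq_iff_eq_on_prime_powers _ (sqrtCount_isMultiplicative a).natCast _
    ((isMultiplicative_moebius.pmul isMultiplicative_moebius).mul hχ)).mpr fun p k hp => ?_
  rcases eq_or_ne k 0 with rfl | hk
  · simp [hχ.map_one, (sqrtCount_isMultiplicative a).map_one]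
  have := Fact.mk hp
  rw [natCoe_apply, pmul_moebius_moebius_mul_apply_prime_pow _ hp hk]
  by_cases hpa : (p : ℤ) ∣ 2 * a
  · rw [sqrtCount_prime_pow_of_dvd hp ha ha4 hpa hk, jacobiChar_prime_pow_of_dvd hp hpa hk]
    rcases eq_or_ne k 1 with rfl | hk1
    · simp [hχ.map_one]
    · rw [if_neg hk1, jacobiChar_prime_pow_of_dvd hp hpa (by omega)]
      simp
  · rw [sqrtCount_prime_pow_of_not_dvd hpa hk, jacobiChar_prime_pow_of_not_dvd hpa,
      jacobiChar_prime_pow_of_not_dvd hpa]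
    have ha0 : (a : ZMod p) ≠ 0 := fun h =>
      hpa (((ZMod.intCast_zmod_eq_zero_iff_dvd a p).mp h).mul_left 2)
    obtain ⟨j, rfl⟩ := Nat.exists_eq_add_of_le' (Nat.pos_of_ne_zero hk)
    rcases legendreSym.eq_one_or_neg_one p ha0 with h | h <;> simp [h, pow_succ]

theorem stmt_3_general (b c : ℤ) (δ : ℤ) (hδ : δ = b ^ 2 - c)
    (hsf : Squarefree δ) (hmod : δ % 4 ≠ 1)
    (ρ : ℕ → ℕ)
    (hρ : ∀ d : ℕ, ρ d = ((Finset.range d).filter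
      (fun m : ℕ => (d : ℤ) ∣ ((m : ℤ) ^ 2 + 2 * b * m + c))).card)
    (χ : ℕ → ℤ)
    (hχ : ∀ n : ℕ, χ n = if Nat.gcd n (2 * δ).natAbs = 1 then jacobiSym δ n else 0)
    (d : ℕ) :
    (ρ d : ℤ) = ∑ l ∈ d.divisors, (ArithmeticFunction.moebius l) ^ 2 * χ (d / l) := by
  subst hδ
  have hρd : (ρ d : ℤ) = (sqrtCount (b ^ 2 - c) : ArithmeticFunction ℤ) d := by
    rw [hρ, card_filter_dvd_quadratic_eq_sqrtCount, natCoe_apply]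
  rw [hρd, sqrtCount_eq_pmul_moebius_moebius_mul_jacobiChar hsf hmod, mul_apply,
    Nat.sum_divisorsAntidiagonal fun x y => pmul μ μ x * jacobiChar _ y]
  refine sum_congr rfl fun l _ => ?_
  rw [pmul_apply, ← sq, hχ, jacobiChar_apply]

theorem stmt_3 (b c : ℤ) (δ : ℤ) (hδ : δ = b ^ 2 - c) (hδ0 : δ ≠ 0)
    (hsf : Squarefree δ) (hmod : δ % 4 ≠ 1)
    (ρ : ℕ → ℕ)
    (hρ : ∀ d : ℕ, ρ d = ((Finset.range d).filter
      (fun m : ℕ => (d : ℤ) ∣ ((m : ℤ) ^ 2 + 2 * b * m + c))).card)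
    (χ : ℕ → ℤ)
    (hχ : ∀ n : ℕ, χ n = if Nat.gcd n (2 * δ).natAbs = 1 then jacobiSym δ n else 0)
    (d : ℕ) (hd : 0 < d) :
    (ρ d : ℤ) = ∑ l ∈ d.divisors, (ArithmeticFunction.moebius l) ^ 2 * χ (d / l) :=
  stmt_3_general b c δ hδ hsf hmod ρ hρ χ hχ d
end

section
/- Let χ be a Dirichlet character and suppose there is a constant κ ≥ 1 such that |Σ_{n ≤ u} χ(n)| ≤ κ for all u ≥ 1, where in addition |Σ_{n ≤ u} χ(n)| ≤ u trivially. Then for every real x ≥ 1, Σ_{m ≤ x} χ(m)/m < log κ + 2. -/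
/-!
Abel summation writes `∑_{m ≤ N} χ(m)/m` as `∑_{m < N} X(m)/(m(m+1)) + X(N)/N` with
`X(m) = ∑_{n ≤ m} χ(n) ≤ min(m, κ)`. Each term `min(m, κ)/(m(m+1))` is at most the increment on
`[m, m+1]` of `G(t) = ∫₁ᵗ min(s, κ)/s² ds`, so the sum telescopes to `G(N)`, and
`G(N) + min(N, κ)/N ≤ log κ + 1`.
-/

open Finset Real

theorem sum_Icc_div_eq_summation_by_parts (χ : ℕ → ℝ) (N : ℕ) :
    ∑ m ∈ Icc 1 N, χ m / m =
      ∑ m ∈ Ico 1 N, (∑ n ∈ Icc 1 m, χ n) / (m * (m + 1)) + (∑ n ∈ Icc 1 N, χ n) / N := by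
  induction N with
  | zero => simp
  | succ n ih =>
    rcases Nat.eq_zero_or_pos n with rfl | hn
    · simp
    · have hn0 : (n : ℝ) ≠ 0 := by positivity
      rw [sum_Icc_succ_top (by omega), sum_Ico_succ_top hn, ih, sum_Icc_succ_top (by omega)]
      push_cast
      field_simp
      ring

theorem sum_Icc_le_min_of_abs_le_one {χ : ℕ → ℝ} (hχ : ∀ n, |χ n| ≤ 1) {κ : ℝ}
    (hκ : ∀ m, |∑ n ∈ Icc 1 m, χ n| ≤ κ) (m : ℕ) :
    ∑ n ∈ Icc 1 m, χ n ≤ min (m : ℝ) κ := by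
  refine (le_abs_self _).trans (le_min ?_ (hκ m))
  calc |∑ n ∈ Icc 1 m, χ n| ≤ ∑ n ∈ Icc 1 m, |χ n| := abs_sum_le_sum_abs _ _
    _ ≤ ∑ _n ∈ Icc 1 m, (1 : ℝ) := sum_le_sum fun n _ ↦ hχ n
    _ = m := by simp

/-- `cappedLog κ t = ∫₁ᵗ min(s, κ) / s² ds` for `t > 0`. -/
noncomputable def cappedLog (κ t : ℝ) : ℝ :=
  if t ≤ κ then log t else log κ + 1 - κ / t

theorem cappedLog_one {κ : ℝ} (hκ : 1 ≤ κ) : cappedLog κ 1 = 0 := by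
  simp [cappedLog, hκ]

theorem inv_add_one_le_log_add_one_sub_log {t : ℝ} (ht : 0 < t) :
    1 / (t + 1) ≤ log (t + 1) - log t := by
  have h := log_le_sub_one_of_pos (div_pos ht (by linarith : 0 < t + 1))
  rw [log_div ht.ne' (by linarith)] at h
  have : t / (t + 1) - 1 = -(1 / (t + 1)) := by field_simp; ring
  linarith

theorem min_div_mul_add_one_le_cappedLog_sub (κ : ℝ) {t : ℝ} (ht : 0 < t) :
    min t κ / (t * (t + 1)) ≤ cappedLog κ (t + 1) - cappedLog κ t := by
  have ht1 : 0 < t + 1 := by linarith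
  have hmin_div (htκ : t ≤ κ) : min t κ / (t * (t + 1)) = 1 / (t + 1) := by
    rw [min_eq_left htκ]; field_simp
  by_cases h1 : t + 1 ≤ κ
  · rw [hmin_div (by linarith), cappedLog, cappedLog, if_pos h1, if_pos (by linarith)]
    exact inv_add_one_le_log_add_one_sub_log ht
  by_cases h2 : t ≤ κ
  · have hκ : 0 < κ := ht.trans_le h2
    have hlog := log_le_sub_one_of_pos (div_pos ht hκ)
    rw [log_div ht.ne' hκ.ne'] at hlog
    have hgap : 0 ≤ (1 - t / κ) + 1 - κ / (t + 1) - 1 / (t + 1) := by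
      have : (1 - t / κ) + 1 - κ / (t + 1) - 1 / (t + 1)
          = (κ - t) * ((t + 1) - κ) / (κ * (t + 1)) := by field_simp; ring
      rw [this]
      exact div_nonneg (mul_nonneg (by linarith) (by linarith)) (by positivity)
    rw [hmin_div h2, cappedLog, cappedLog, if_neg h1, if_pos h2]
    linarith
  · have : κ / (t * (t + 1)) = κ / t - κ / (t + 1) := by field_simp; ring
    rw [min_eq_right (le_of_not_ge h2), cappedLog, cappedLog, if_neg h1, if_neg h2, this]
    linarith

theorem sum_Ico_min_div_le_cappedLog (κ : ℝ) {N : ℕ} (hN : 1 ≤ N) :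
    ∑ m ∈ Ico 1 N, min (m : ℝ) κ / (m * (m + 1)) ≤ cappedLog κ N - cappedLog κ 1 := by
  calc ∑ m ∈ Ico 1 N, min (m : ℝ) κ / (m * (m + 1))
      ≤ ∑ m ∈ Ico 1 N, (cappedLog κ ↑(m + 1) - cappedLog κ m) := by
        refine sum_le_sum fun m hm ↦ ?_
        push_cast
        exact min_div_mul_add_one_le_cappedLog_sub κ (by exact_mod_cast (mem_Ico.mp hm).1)
    _ = cappedLog κ N - cappedLog κ 1 := by
        rw [sum_Ico_sub (fun m : ℕ ↦ cappedLog κ m) hN, Nat.cast_one]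

theorem cappedLog_add_min_div_le (κ : ℝ) {t : ℝ} (ht : 0 < t) :
    cappedLog κ t + min t κ / t ≤ log κ + 1 := by
  unfold cappedLog
  split_ifs with htκ
  · have : min t κ / t ≤ 1 := (div_le_one ht).mpr (min_le_left _ _)
    linarith [log_le_log ht htκ]
  · have : min t κ / t ≤ κ / t := div_le_div_of_nonneg_right (min_le_right _ _) ht.le
    linarith

theorem sum_Icc_div_le_log_add_one {χ : ℕ → ℝ} {κ : ℝ} (hκ1 : 1 ≤ κ)
    (hX : ∀ m, ∑ n ∈ Icc 1 m, χ n ≤ min (m : ℝ) κ) (N : ℕ) :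
    ∑ m ∈ Icc 1 N, χ m / m ≤ log κ + 1 := by
  rcases Nat.eq_zero_or_pos N with rfl | hN
  · simpa using (log_nonneg hκ1).trans (le_add_of_nonneg_right zero_le_one)
  have hN0 : (0 : ℝ) < N := by exact_mod_cast hN
  calc ∑ m ∈ Icc 1 N, χ m / m
      = ∑ m ∈ Ico 1 N, (∑ n ∈ Icc 1 m, χ n) / (m * (m + 1)) + (∑ n ∈ Icc 1 N, χ n) / N :=
        sum_Icc_div_eq_summation_by_parts χ N
    _ ≤ ∑ m ∈ Ico 1 N, min (m : ℝ) κ / (m * (m + 1)) + min (N : ℝ) κ / N := by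
        gcongr with m
        · exact hX m
        · exact hX N
    _ ≤ cappedLog κ N - cappedLog κ 1 + min (N : ℝ) κ / N := by
        gcongr; exact sum_Ico_min_div_le_cappedLog κ hN
    _ ≤ log κ + 1 := by
        rw [cappedLog_one hκ1, sub_zero]; exact cappedLog_add_min_div_le κ hN0

theorem stmt_7_general (χ : ℕ → ℝ) (hvals : ∀ n, χ n = -1 ∨ χ n = 0 ∨ χ n = 1)
    (κ : ℝ) (hκ1 : 1 ≤ κ)
    (hκ : ∀ u : ℝ, 1 ≤ u → |∑ n ∈ Finset.Icc 1 ⌊u⌋₊, χ n| ≤ κ)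
    (x : ℝ) :
    ∑ m ∈ Finset.Icc 1 ⌊x⌋₊, χ m / m < Real.log κ + 2 := by
  have hχ (n : ℕ) : |χ n| ≤ 1 := by rcases hvals n with h | h | h <;> simp [h]
  have hXκ (m : ℕ) : |∑ n ∈ Icc 1 m, χ n| ≤ κ := by
    rcases Nat.eq_zero_or_pos m with rfl | hm
    · simpa using zero_le_one.trans hκ1
    · simpa using hκ m (by exact_mod_cast hm)
  have := sum_Icc_div_le_log_add_one hκ1 (sum_Icc_le_min_of_abs_le_one hχ hXκ) ⌊x⌋₊
  linarith

theorem stmt_7 (χ : ℕ → ℝ) (hvals : ∀ n, χ n = -1 ∨ χ n = 0 ∨ χ n = 1)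
    (κ : ℝ) (hκ1 : 1 ≤ κ)
    (hκ : ∀ u : ℝ, 1 ≤ u → |∑ n ∈ Finset.Icc 1 ⌊u⌋₊, χ n| ≤ κ)
    (x : ℝ) (hx : 1 ≤ x) :
    ∑ m ∈ Finset.Icc 1 ⌊x⌋₊, χ m / m < Real.log κ + 2 :=
  stmt_7_general χ hvals κ hκ1 hκ x
end

section
/- Let f : ℕ → ℕ be positive and non-decreasing with f(n) never a perfect square, and let ρ(d) = #{0 ≤ m < d : f(m) ≡ 0 (mod d)} where f is a polynomial with integer coefficients (so divisibility is periodic modulo d). Then for any N ≥ 1, Σ_{n ≤ N} τ(f(n)) ≤ 2N·Σ_{d ≤ √(f(N))} ρ(d)/d + 2·Σ_{d ≤ √(f(N))} ρ(d). -/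
/-!
Every divisor `e > √m` of `m` is `m / d` for the divisor `d = m / e < √m`, so `τ(m)` is at most
twice the number of divisors `d ≤ √m`. When `f` is non-decreasing, `√(f n) ≤ √(f N)` for `n ≤ N`,
and swapping the two sums leaves, for each `d ≤ √(f N)`, the number of `n ≤ N` with `d ∣ f n`.
Divisibility of `f n` by `d` depends only on `n mod d`, so there are at most `ρ(d)` admissible
residues, each hit by at most `N / d + 1` integers `n ≤ N`.
-/

open Finset

lemma Nat.card_divisors_le_two_mul_card_filter_Icc {m D : ℕ} (hD : ∀ d, d * d ≤ m → d ≤ D) :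
    #m.divisors ≤ 2 * #{d ∈ Icc 1 D | d ∣ m} := by
  set S := {d ∈ Icc 1 D | d ∣ m}
  have hsub : m.divisors ⊆ S ∪ S.image (m / ·) := by
    intro e he
    obtain ⟨he, hm⟩ := Nat.mem_divisors.mp he
    have hsmall : ∀ d, d ∣ m → d * d ≤ m → d ∈ S := fun d hd hdd =>
      mem_filter.mpr ⟨mem_Icc.mpr ⟨Nat.pos_of_dvd_of_pos hd (Nat.pos_of_ne_zero hm), hD d hdd⟩, hd⟩
    by_cases hee : e * e ≤ m
    · exact mem_union_left _ (hsmall e he hee)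
    · refine mem_union_right _ (mem_image.mpr ⟨m / e, hsmall _ (Nat.div_dvd_of_dvd he) ?_,
        Nat.div_div_self he hm⟩)
      have hlt : m / e < e := Nat.div_lt_of_lt_mul (by omega)
      calc m / e * (m / e) ≤ m / e * e := Nat.mul_le_mul_left _ hlt.le
        _ = m := Nat.div_mul_cancel he
  calc #m.divisors ≤ #(S ∪ S.image (m / ·)) := card_le_card hsub
    _ ≤ #S + #S := (card_union_le _ _).trans (Nat.add_le_add_left Finset.card_image_le _)
    _ = 2 * #S := (two_mul _).symm

lemma Int.card_divisors_toNat_le_two_mul_card_filter_Icc {z : ℤ} {D : ℕ}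
    (hD : ∀ d : ℕ, (d * d : ℤ) ≤ z → d ≤ D) :
    #z.toNat.divisors ≤ 2 * #{d ∈ Icc 1 D | ↑d ∣ z} := by
  rcases le_or_gt z 0 with hz | hz
  · simp [Int.toNat_of_nonpos hz]
  · lift z to ℕ using hz.le
    simp only [Int.toNat_natCast, Int.natCast_dvd_natCast]
    exact Nat.card_divisors_le_two_mul_card_filter_Icc fun d hd => hD d (by exact_mod_cast hd)

lemma sum_card_divisors_toNat_le {ι : Type*} (s : Finset ι) (f : ι → ℤ) {D : ℕ}
    (hD : ∀ n ∈ s, ∀ d : ℕ, (d * d : ℤ) ≤ f n → d ≤ D) :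
    ∑ n ∈ s, #(f n).toNat.divisors ≤ 2 * ∑ d ∈ Icc 1 D, #{n ∈ s | (d : ℤ) ∣ f n} := by
  calc ∑ n ∈ s, #(f n).toNat.divisors ≤ ∑ n ∈ s, 2 * #{d ∈ Icc 1 D | ↑d ∣ f n} :=
        sum_le_sum fun n hn => Int.card_divisors_toNat_le_two_mul_card_filter_Icc (hD n hn)
    _ = 2 * ∑ d ∈ Icc 1 D, #{n ∈ s | (d : ℤ) ∣ f n} := by
        simp only [← mul_sum, card_filter]
        rw [sum_comm]

lemma card_filter_Icc_le_of_periodic (P : ℕ → Prop) [DecidablePred P] {d : ℕ} (hd : 0 < d)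
    (hP : ∀ n, P n ↔ P (n % d)) (N : ℕ) :
    #{n ∈ Icc 1 N | P n} ≤ #{r ∈ range d | P r} * (N / d + 1) := by
  rw [← card_range (N / d + 1), ← card_product]
  refine card_le_card_of_injOn (fun n => (n % d, n / d)) (fun n hn => ?_) (fun n _ m _ h => ?_)
  · simp only [coe_filter, mem_Icc, Set.mem_ofPred_eq] at hn
    simp only [coe_product, coe_filter, coe_range, Set.mem_prod, Set.mem_ofPred_eq, Set.mem_Iio]
    exact ⟨⟨mem_range.mpr (Nat.mod_lt n hd), (hP n).mp hn.2⟩,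
      Nat.lt_succ_of_le (Nat.div_le_div_right hn.1.2)⟩
  · simp only [Prod.mk.injEq] at h
    rw [← Nat.div_add_mod n d, ← Nat.div_add_mod m d, h.1, h.2]

lemma Int.dvd_quadratic_iff_dvd_mod (b c : ℤ) (d n : ℕ) :
    (d : ℤ) ∣ (n : ℤ) ^ 2 + 2 * b * n + c ↔
      (d : ℤ) ∣ ((n % d : ℕ) : ℤ) ^ 2 + 2 * b * (n % d : ℕ) + c := by
  have h : (n : ℤ) ≡ (n % d : ℕ) [ZMOD d] :=
    Int.natCast_modEq_iff.mpr (Nat.mod_modEq n d).symm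
  exact Int.ModEq.dvd_iff (by gcongr)

lemma Nat.le_floor_sqrt_of_mul_self_le {z : ℤ} {d : ℕ} (h : (d * d : ℤ) ≤ z) :
    d ≤ ⌊Real.sqrt z⌋₊ := by
  refine Nat.le_floor ?_
  rw [← Real.sqrt_mul_self (Nat.cast_nonneg d)]
  exact Real.sqrt_le_sqrt (by exact_mod_cast h)

lemma natCast_le_mul_div_add_of_le_mul_div_add_one {k ρ N d : ℕ} (h : k ≤ ρ * (N / d + 1)) :
    (k : ℝ) ≤ N * ((ρ : ℝ) / d) + ρ :=
  calc (k : ℝ) ≤ ρ * ((N / d : ℕ) + 1) := by exact_mod_cast h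
    _ ≤ ρ * ((N : ℝ) / d + 1) := by gcongr; exact Nat.cast_div_le
    _ = N * ((ρ : ℝ) / d) + ρ := by ring

theorem stmt_18_general (b c : ℤ)
    (hmono : ∀ n : ℕ, 1 ≤ n →
      (n : ℤ) ^ 2 + 2 * b * n + c ≤ ((n : ℤ) + 1) ^ 2 + 2 * b * ((n : ℤ) + 1) + c)
    (ρ : ℕ → ℕ)
    (hρ : ∀ d : ℕ, ρ d = ((Finset.range d).filter
      (fun m : ℕ => (d : ℤ) ∣ ((m : ℤ) ^ 2 + 2 * b * m + c))).card)
    (N : ℕ) :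
    (∑ n ∈ Finset.Icc 1 N,
      ((((n : ℤ) ^ 2 + 2 * b * n + c).toNat.divisors.card : ℝ))) ≤
      2 * N * ∑ d ∈ Finset.Icc 1 ⌊Real.sqrt ((((N : ℤ) ^ 2 + 2 * b * N + c : ℤ) : ℝ))⌋₊,
        (ρ d : ℝ) / d
      + 2 * ∑ d ∈ Finset.Icc 1 ⌊Real.sqrt ((((N : ℤ) ^ 2 + 2 * b * N + c : ℤ) : ℝ))⌋₊,
        (ρ d : ℝ) := by
  set f : ℕ → ℤ := fun n => (n : ℤ) ^ 2 + 2 * b * n + c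
  set D := ⌊Real.sqrt (f N : ℝ)⌋₊
  have hf_mono : MonotoneOn f (Set.Ici 1) :=
    monotoneOn_of_le_add_one Set.ordConnected_Ici fun n _ hn _ => by
      simpa [f] using hmono n hn
  have hD : ∀ n ∈ Icc 1 N, ∀ d : ℕ, (d * d : ℤ) ≤ f n → d ≤ D := fun n hn d hd =>
    have hn := mem_Icc.mp hn
    Nat.le_floor_sqrt_of_mul_self_le (hd.trans (hf_mono hn.1 (hn.1.trans hn.2) hn.2))
  have hcount : ∀ d ∈ Icc 1 D, (#{n ∈ Icc 1 N | (d : ℤ) ∣ f n} : ℝ) ≤ N * (ρ d / d) + ρ d :=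
    fun d hd => natCast_le_mul_div_add_of_le_mul_div_add_one <| by
      rw [hρ d]
      exact card_filter_Icc_le_of_periodic _ (mem_Icc.mp hd).1
        (Int.dvd_quadratic_iff_dvd_mod b c d) N
  calc (∑ n ∈ Icc 1 N, (#(f n).toNat.divisors : ℝ))
      ≤ 2 * ∑ d ∈ Icc 1 D, (#{n ∈ Icc 1 N | (d : ℤ) ∣ f n} : ℝ) := by
        exact_mod_cast sum_card_divisors_toNat_le _ f hD
    _ ≤ 2 * ∑ d ∈ Icc 1 D, (N * (ρ d / d) + ρ d : ℝ) := by gcongr with d hd; exact hcount d hd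
    _ = _ := by rw [sum_add_distrib, ← mul_sum]; ring

theorem stmt_18 (b c : ℤ)
    (hpos : ∀ n : ℕ, 1 ≤ n → 0 < (n : ℤ) ^ 2 + 2 * b * n + c)
    (hmono : ∀ n : ℕ, 1 ≤ n →
      (n : ℤ) ^ 2 + 2 * b * n + c ≤ ((n : ℤ) + 1) ^ 2 + 2 * b * ((n : ℤ) + 1) + c)
    (hnsq : ∀ n : ℕ, 1 ≤ n → ¬ IsSquare ((n : ℤ) ^ 2 + 2 * b * n + c))
    (ρ : ℕ → ℕ)
    (hρ : ∀ d : ℕ, ρ d = ((Finset.range d).filter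
      (fun m : ℕ => (d : ℤ) ∣ ((m : ℤ) ^ 2 + 2 * b * m + c))).card)
    (N : ℕ) (hN : 1 ≤ N) :
    (∑ n ∈ Finset.Icc 1 N,
      ((((n : ℤ) ^ 2 + 2 * b * n + c).toNat.divisors.card : ℝ))) ≤
      2 * N * ∑ d ∈ Finset.Icc 1 ⌊Real.sqrt ((((N : ℤ) ^ 2 + 2 * b * N + c : ℤ) : ℝ))⌋₊,
        (ρ d : ℝ) / d
      + 2 * ∑ d ∈ Finset.Icc 1 ⌊Real.sqrt ((((N : ℤ) ^ 2 + 2 * b * N + c : ℤ) : ℝ))⌋₊,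
        (ρ d : ℝ) :=
  stmt_18_general b c hmono ρ hρ N
end
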